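/- Let n ≥ 5 and z = (z₁,…,z_{n−2})ᵀ ∈ ℝ^{n−2}. Let B be the n×n matrix whose central (n−2)×(n−2) block (rows and columns 2 to n−1) equals 𝒯(z) − ℋ(σ²(z), Jσ²(z)), whose first column has entries B_{1,1} = z₁ + 2·Σ_{k=2}^{n−2} z_k, B_{i,1} = z_i + 2·Σ_{k=i+1}^{n−2} z_k for 2 ≤ i ≤ n−2, and B_{i,1} = 0 for i = n−1, n, whose last column is the vertical flip of the first column (B_{i,n} = B_{n+1−i,1}), and whose remaining entries (in the first and last rows outside the corners) are zero. Then B belongs to the anti-reflective algebra 𝒜ℛ; that is, T_n^{−1} B T_n is a diagonal matrix. -/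

import Mathlib

open Matrix

/-- The sine transform matrix of type I: `(S_m)_{ij} = sqrt(2/(m+1))·sin(ijπ/(m+1))`
for `1 ≤ i,j ≤ m` (indexed here by `Fin m`, i.e. with indices shifted by one). -/
noncomputable def sineMat (m : ℕ) : Matrix (Fin m) (Fin m) ℝ :=
  Matrix.of fun i j =>
    Real.sqrt (2 / (m + 1)) *
      Real.sin ((((i : ℕ) : ℝ) + 1) * (((j : ℕ) : ℝ) + 1) * Real.pi / (m + 1))

/-- The symmetric Toeplitz matrix generated by `z`: `𝒯(z)_{ij} = z_{|i-j|+1}` (1-based). -/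
def toeplitzS (n : ℕ) (z : Fin n → ℝ) : Matrix (Fin n) (Fin n) ℝ :=
  Matrix.of fun i j =>
    z ⟨(i : ℕ) - (j : ℕ) + ((j : ℕ) - (i : ℕ)), by have := i.isLt; have := j.isLt; omega⟩

/-- The Hankel matrix with first column `v` and last column `w`:
`ℋ(v,w)_{ij} = v_{i+j-1}` if `i+j-1 ≤ n`, and `w_{i+j-n}` otherwise (1-based). -/
def hankelM (n : ℕ) (v w : Fin n → ℝ) : Matrix (Fin n) (Fin n) ℝ :=
  Matrix.of fun i j =>
    if h : (i : ℕ) + (j : ℕ) < n then v ⟨(i : ℕ) + (j : ℕ), h⟩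
    else w ⟨(i : ℕ) + (j : ℕ) + 1 - n, by have := i.isLt; have := j.isLt; omega⟩

/-- The upward shift `σ(z) = (z₂,…,zₙ,0)ᵀ`. -/
def shiftVec (n : ℕ) (z : Fin n → ℝ) : Fin n → ℝ := fun i =>
  if h : (i : ℕ) + 1 < n then z ⟨(i : ℕ) + 1, h⟩ else 0

/-- The flip `(Jz)_i = z_{n+1-i}` (1-based). -/
def flipVec (n : ℕ) (z : Fin n → ℝ) : Fin n → ℝ := fun i =>
  z ⟨n - 1 - (i : ℕ), by have := i.isLt; omega⟩

/-- The vector `p ∈ ℝ^{n-2}` with `p_j = 1 - j/(n-1)` for `j = 1,…,n-2` (1-based). -/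
noncomputable def pvec (n : ℕ) : Fin (n - 2) → ℝ := fun j => 1 - (((j : ℕ) : ℝ) + 1) / ((n : ℝ) - 1)

/-- The `m×m` flip (anti-identity) matrix. -/
def flipMat (m : ℕ) : Matrix (Fin m) (Fin m) ℝ :=
  Matrix.of fun i j => if (i : ℕ) + (j : ℕ) = m - 1 then 1 else 0

/-- The `n×n` matrix with block form `[[1,0,0],[x, M, y],[0,0,1]]`. -/
noncomputable def blockT (n : ℕ) (x y : Fin (n - 2) → ℝ)
    (M : Matrix (Fin (n - 2)) (Fin (n - 2)) ℝ) : Matrix (Fin n) (Fin n) ℝ :=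
  Matrix.of fun i j =>
    if (i : ℕ) = 0 then (if (j : ℕ) = 0 then 1 else 0)
    else if (i : ℕ) = n - 1 then (if (j : ℕ) = n - 1 then 1 else 0)
    else if h : 0 < (i : ℕ) ∧ (i : ℕ) < n - 1 then
      if (j : ℕ) = 0 then x ⟨(i : ℕ) - 1, by omega⟩
      else if (j : ℕ) = n - 1 then y ⟨(i : ℕ) - 1, by omega⟩
      else if h2 : 0 < (j : ℕ) ∧ (j : ℕ) < n - 1 then
        M ⟨(i : ℕ) - 1, by omega⟩ ⟨(j : ℕ) - 1, by omega⟩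
      else 0
    else 0

/-- The anti-reflective transform `T_n = [[1,0,0],[p, S_{n-2}, Jp],[0,0,1]]`. -/
noncomputable def Tmat (n : ℕ) : Matrix (Fin n) (Fin n) ℝ :=
  blockT n (pvec n) ((flipMat (n - 2)).mulVec (pvec n)) (sineMat (n - 2))

/-- `T_n⁻¹ = [[1,0,0],[-S_{n-2}p, S_{n-2}, -S_{n-2}Jp],[0,0,1]]`. -/
noncomputable def TinvMat (n : ℕ) : Matrix (Fin n) (Fin n) ℝ :=
  blockT n (fun i => -((sineMat (n - 2)).mulVec (pvec n) i))
    (fun i => -((sineMat (n - 2)).mulVec ((flipMat (n - 2)).mulVec (pvec n)) i))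
    (sineMat (n - 2))

/-- The first column of the matrix `AR(A)`: entry `i` (1-based) equals
`z_i + 2·Σ_{k=i+1}^{n-2} z_k` for `1 ≤ i ≤ n-2` and `0` for `i = n-1, n`. -/
noncomputable def arCol (n : ℕ) (z : Fin (n - 2) → ℝ) : Fin n → ℝ := fun i =>
  if h : (i : ℕ) < n - 2 then
    z ⟨(i : ℕ), h⟩ + 2 * ∑ k : Fin (n - 2), (if (i : ℕ) < (k : ℕ) then z k else 0)
  else 0

/-- The matrix `B` of STATEMENT 11: central block `𝒯(z) - ℋ(σ²(z), Jσ²(z))`, first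
column `arCol n z`, last column its vertical flip, and zeros in the remaining entries
of the first and last rows. -/
noncomputable def arMat (n : ℕ) (z : Fin (n - 2) → ℝ) : Matrix (Fin n) (Fin n) ℝ :=
  Matrix.of fun i j =>
    if (j : ℕ) = 0 then arCol n z i
    else if (j : ℕ) = n - 1 then arCol n z ⟨n - 1 - (i : ℕ), by have := i.isLt; omega⟩
    else if h : 0 < (i : ℕ) ∧ (i : ℕ) < n - 1 ∧ 0 < (j : ℕ) ∧ (j : ℕ) < n - 1 then
      (toeplitzS (n - 2) z
          - hankelM (n - 2) (shiftVec (n - 2) (shiftVec (n - 2) z))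
              (flipVec (n - 2) (shiftVec (n - 2) (shiftVec (n - 2) z))))
        ⟨(i : ℕ) - 1, by omega⟩ ⟨(j : ℕ) - 1, by omega⟩
    else 0

namespace ARP

/-- `z` extended by zero to all of `ℕ`. -/
def zext (m : ℕ) (z : Fin m → ℝ) : ℕ → ℝ := fun k => if h : k < m then z ⟨k, h⟩ else 0

/-- The central block `𝒯(z) − ℋ(σ²z, Jσ²z)`. -/
noncomputable def centerM (m : ℕ) (z : Fin m → ℝ) : Matrix (Fin m) (Fin m) ℝ :=
  toeplitzS m z - hankelM m (shiftVec m (shiftVec m z)) (flipVec m (shiftVec m (shiftVec m z)))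

lemma shift_apply (m : ℕ) (z : Fin m → ℝ) (i : Fin m) :
    shiftVec m z i = zext m z ((i : ℕ) + 1) := by
  unfold shiftVec zext
  split_ifs <;> rfl

lemma shift2_apply (m : ℕ) (z : Fin m → ℝ) (i : Fin m) :
    shiftVec m (shiftVec m z) i = zext m z ((i : ℕ) + 2) := by
  rw [shift_apply]
  by_cases h : (i:ℕ)+1 < m
  · rw [show zext m (shiftVec m z) ((i:ℕ)+1) = shiftVec m z ⟨(i:ℕ)+1, h⟩ from dif_pos h]
    rw [shift_apply]
  · rw [zext, dif_neg h, zext, dif_neg (by omega)]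

lemma centerM_apply (m : ℕ) (z : Fin m → ℝ) (i j : Fin m) :
    centerM m z i j
      = zext m z ((i:ℕ) - (j:ℕ) + ((j:ℕ) - (i:ℕ))) - zext m z ((i:ℕ)+(j:ℕ)+2)
        - zext m z (2*m - (i:ℕ) - (j:ℕ)) := by
  have hi := i.isLt; have hj := j.isLt
  simp only [centerM, Matrix.sub_apply, toeplitzS, hankelM, Matrix.of_apply]
  rw [show z ⟨(i:ℕ) - (j:ℕ) + ((j:ℕ) - (i:ℕ)), by omega⟩
      = zext m z ((i:ℕ) - (j:ℕ) + ((j:ℕ) - (i:ℕ))) by rw [zext]; rw [dif_pos]]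
  rcases lt_or_ge ((i:ℕ)+(j:ℕ)) m with h | h
  · rw [dif_pos h, shift2_apply]
    rw [show zext m z (2*m - (i:ℕ) - (j:ℕ)) = 0 by rw [zext, dif_neg (by omega)]]
    ring
  · rw [dif_neg (by omega)]
    rw [show (flipVec m (shiftVec m (shiftVec m z))) ⟨(i:ℕ)+(j:ℕ)+1 - m, by omega⟩
        = zext m z (2*m - (i:ℕ) - (j:ℕ)) from ?_]
    · rw [show zext m z ((i:ℕ)+(j:ℕ)+2) = 0 by rw [zext, dif_neg (by omega)]]
      ring
    · rw [flipVec]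
      rw [shift2_apply]
      congr 1
      simp only []
      omega

lemma sum_ite_unique {m : ℕ} (f : Fin m → ℝ) (P : Fin m → Prop) [DecidablePred P]
    (j₀ : Fin m) (h : ∀ j, P j ↔ j = j₀) :
    (∑ j : Fin m, if P j then f j else 0) = f j₀ := by
  rw [Finset.sum_congr rfl fun j _ => if_congr (h j) rfl rfl]
  simp

lemma sum_ite_none {m : ℕ} (f : Fin m → ℝ) (P : Fin m → Prop) [DecidablePred P]
    (h : ∀ j, ¬ P j) : (∑ j : Fin m, if P j then f j else 0) = 0 :=
  Finset.sum_eq_zero fun j _ => if_neg (h j)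

lemma sum_ite_pair {m : ℕ} (f : Fin m → ℝ) (P : Fin m → Prop) [DecidablePred P]
    (j₀ j₁ : Fin m) (hne : j₀ ≠ j₁) (h : ∀ j, P j ↔ j = j₀ ∨ j = j₁) :
    (∑ j : Fin m, if P j then f j else 0) = f j₀ + f j₁ := by
  have key : ∀ j : Fin m, (if P j then f j else 0)
      = (if j = j₀ then f j else 0) + (if j = j₁ then f j else 0) := by
    intro j
    by_cases h0 : j = j₀ <;> by_cases h1 : j = j₁ <;>
      simp_all [h j]
  rw [Finset.sum_congr rfl fun j _ => key j, Finset.sum_add_distrib]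
  simp

lemma zext_eq_sum (m : ℕ) (z : Fin m → ℝ) (t : ℕ) :
    zext m z t = ∑ k : Fin m, (if (k:ℕ) = t then z k else 0) := by
  rcases lt_or_ge t m with h | h
  · rw [zext, dif_pos h]
    rw [sum_ite_unique z (fun k => (k:ℕ) = t) ⟨t,h⟩ (fun j => by
      constructor
      · intro hh; exact Fin.ext hh
      · intro hh; rw [hh])]
  · rw [zext, dif_neg (by omega)]
    exact (sum_ite_none z _ (fun j => by have := j.isLt; omega)).symm

end ARP
namespace ARP

set_option maxHeartbeats 1600000 in
/-- Master identity: action of the central block on samples of `g : ℤ → ℝ`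
satisfying a reflection identity at `m+1` and a cosine-like addition rule. -/
lemma centerM_sum_g (m : ℕ) (z : Fin m → ℝ) (g : ℤ → ℝ) (W : ℕ → ℝ)
    (Hrefl : ∀ x : ℤ, g (2*(m+1) - x) = - g x)
    (HW : ∀ (x : ℤ) (k : ℕ), 1 ≤ k → k < m → g (x - k) + g (x + k) = W k * g x)
    (i : Fin m) :
    ∑ j : Fin m, centerM m z i j * g ((j:ℕ)+1)
      = (∑ k : Fin m, z k * (if (k:ℕ) = 0 then 1 else W k)) * g ((i:ℕ)+1)
        - ∑ k : Fin m, z k *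
            ((if (k:ℕ) = (i:ℕ)+1 then g 0 else 0)
              + (if (i:ℕ)+2 ≤ (k:ℕ) then
                  g (((k:ℕ):ℤ) - ((i:ℕ):ℤ) - 1) + g (((i:ℕ):ℤ) + 1 - ((k:ℕ):ℤ)) else 0)) := by
  have hi := i.isLt
  have hg0 : g ((m:ℤ)+1) = 0 := by
    have h0 := Hrefl ((m:ℤ)+1)
    rw [show (2*((m:ℤ)+1) - ((m:ℤ)+1)) = (m:ℤ)+1 by ring] at h0; linarith
  have perk : ∀ k : Fin m,
      (∑ j : Fin m, (((if (k:ℕ) = (i:ℕ) - (j:ℕ) + ((j:ℕ) - (i:ℕ)) then (1:ℝ) else 0)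
          - (if (k:ℕ) = (i:ℕ)+(j:ℕ)+2 then 1 else 0)
          - (if (k:ℕ) = 2*m - (i:ℕ) - (j:ℕ) then 1 else 0)) * g ((j:ℕ)+1)))
        = (if (k:ℕ) = 0 then 1 else W k) * g ((i:ℕ)+1)
          - ((if (k:ℕ) = (i:ℕ)+1 then g 0 else 0)
            + (if (i:ℕ)+2 ≤ (k:ℕ) then
                g (((k:ℕ):ℤ) - ((i:ℕ):ℤ) - 1) + g (((i:ℕ):ℤ) + 1 - ((k:ℕ):ℤ)) else 0)) := by
    intro k
    have hk := k.isLt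
    simp only [sub_mul, ite_mul, one_mul, zero_mul]
    rw [Finset.sum_sub_distrib, Finset.sum_sub_distrib]
    have gv : ∀ j : Fin m, g ((j:ℕ)+1) = (fun j : Fin m => g ((j:ℕ)+1)) j := fun _ => rfl
    -- names for the three sums' evaluations
    by_cases hk0 : (k:ℕ) = 0
    · rw [sum_ite_unique (fun j : Fin m => g ((j:ℕ)+1))
        (fun j => (k:ℕ) = (i:ℕ) - (j:ℕ) + ((j:ℕ) - (i:ℕ))) i
        (fun j => by rw [Fin.ext_iff]; omega)]
      rw [sum_ite_none (fun j : Fin m => g ((j:ℕ)+1))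
        (fun j => (k:ℕ) = (i:ℕ)+(j:ℕ)+2) (fun j => by omega)]
      rw [sum_ite_none (fun j : Fin m => g ((j:ℕ)+1))
        (fun j => (k:ℕ) = 2*m - (i:ℕ) - (j:ℕ)) (fun j => by have := j.isLt; omega)]
      rw [if_pos hk0, if_neg (by omega), if_neg (by omega)]
      ring
    · -- k ≥ 1
      rw [if_neg hk0]
      have HW' := HW (((i:ℕ):ℤ)+1) (k:ℕ) (by omega) hk
      have eT1pair : (i:ℕ)+(k:ℕ) < m → 1 ≤ (k:ℕ) → (k:ℕ) ≤ (i:ℕ) →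
          (∑ j : Fin m, if (k:ℕ) = (i:ℕ) - (j:ℕ) + ((j:ℕ) - (i:ℕ)) then g ((j:ℕ)+1) else 0)
            = g (((i:ℕ):ℤ)+1-((k:ℕ):ℤ)) + g (((i:ℕ):ℤ)+1+((k:ℕ):ℤ)) := by
        intro h1 h2 h3
        rw [sum_ite_pair (fun j : Fin m => g ((j:ℕ)+1)) _
          ⟨(i:ℕ)-(k:ℕ), by omega⟩ ⟨(i:ℕ)+(k:ℕ), by omega⟩
          (by simp only [ne_eq, Fin.ext_iff, Fin.val_mk]; omega)
          (fun j => by simp only [Fin.ext_iff, Fin.val_mk]; omega)]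
        congr 1 <;> · congr 1; simp only [Fin.val_mk]; omega
      have eT1left : 1 ≤ (k:ℕ) → (k:ℕ) ≤ (i:ℕ) → m ≤ (i:ℕ)+(k:ℕ) →
          (∑ j : Fin m, if (k:ℕ) = (i:ℕ) - (j:ℕ) + ((j:ℕ) - (i:ℕ)) then g ((j:ℕ)+1) else 0)
            = g (((i:ℕ):ℤ)+1-((k:ℕ):ℤ)) := by
        intro h1 h2 h3
        rw [sum_ite_unique (fun j : Fin m => g ((j:ℕ)+1)) _ ⟨(i:ℕ)-(k:ℕ), by omega⟩
          (fun j => by simp only [Fin.ext_iff, Fin.val_mk]; have := j.isLt; omega)]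
        congr 1; simp only [Fin.val_mk]; omega
      have eT1right : (i:ℕ)+1 ≤ (k:ℕ) → (i:ℕ)+(k:ℕ) < m →
          (∑ j : Fin m, if (k:ℕ) = (i:ℕ) - (j:ℕ) + ((j:ℕ) - (i:ℕ)) then g ((j:ℕ)+1) else 0)
            = g (((i:ℕ):ℤ)+1+((k:ℕ):ℤ)) := by
        intro h1 h2
        rw [sum_ite_unique (fun j : Fin m => g ((j:ℕ)+1)) _ ⟨(i:ℕ)+(k:ℕ), by omega⟩
          (fun j => by simp only [Fin.ext_iff, Fin.val_mk]; have := j.isLt; omega)]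
        congr 1; simp only [Fin.val_mk]; omega
      have eT1none : (i:ℕ)+1 ≤ (k:ℕ) → m ≤ (i:ℕ)+(k:ℕ) →
          (∑ j : Fin m, if (k:ℕ) = (i:ℕ) - (j:ℕ) + ((j:ℕ) - (i:ℕ)) then g ((j:ℕ)+1) else 0)
            = 0 := by
        intro h1 h2
        exact sum_ite_none _ _ (fun j => by have := j.isLt; omega)
      have eT2none : (k:ℕ) < (i:ℕ)+2 →
          (∑ j : Fin m, if (k:ℕ) = (i:ℕ)+(j:ℕ)+2 then g ((j:ℕ)+1) else 0) = 0 := by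
        intro h1
        exact sum_ite_none _ _ (fun j => by omega)
      have eT2some : (i:ℕ)+2 ≤ (k:ℕ) →
          (∑ j : Fin m, if (k:ℕ) = (i:ℕ)+(j:ℕ)+2 then g ((j:ℕ)+1) else 0)
            = g (((k:ℕ):ℤ)-((i:ℕ):ℤ)-1) := by
        intro h1
        rw [sum_ite_unique (fun j : Fin m => g ((j:ℕ)+1)) _ ⟨(k:ℕ)-(i:ℕ)-2, by omega⟩
          (fun j => by simp only [Fin.ext_iff, Fin.val_mk]; omega)]
        congr 1; simp only [Fin.val_mk]; omega
      have eT3none : (i:ℕ)+(k:ℕ) ≤ m →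
          (∑ j : Fin m, if (k:ℕ) = 2*m - (i:ℕ) - (j:ℕ) then g ((j:ℕ)+1) else 0) = 0 := by
        intro h1
        exact sum_ite_none _ _ (fun j => by have := j.isLt; omega)
      have eT3some : m+1 ≤ (i:ℕ)+(k:ℕ) →
          (∑ j : Fin m, if (k:ℕ) = 2*m - (i:ℕ) - (j:ℕ) then g ((j:ℕ)+1) else 0)
            = g (2*((m:ℤ)+1) - (((i:ℕ):ℤ)+1+((k:ℕ):ℤ))) := by
        intro h1
        rw [sum_ite_unique (fun j : Fin m => g ((j:ℕ)+1)) _ ⟨2*m-(i:ℕ)-(k:ℕ), by omega⟩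
          (fun j => by simp only [Fin.ext_iff, Fin.val_mk]; have := j.isLt; omega)]
        congr 1; simp only [Fin.val_mk]; omega
      have hB := Hrefl (((i:ℕ):ℤ)+1+((k:ℕ):ℤ))
      rcases lt_trichotomy ((k:ℕ)) ((i:ℕ)+1) with hki | hki | hki
      · -- 1 ≤ k ≤ i
        rw [if_neg (by omega), if_neg (by omega), eT2none (by omega)]
        rcases lt_or_ge ((i:ℕ)+(k:ℕ)) m with hr | hr
        · rw [eT1pair hr (by omega) (by omega), eT3none (by omega)]
          linarith
        · rw [eT1left (by omega) (by omega) hr]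
          rcases eq_or_lt_of_le hr with hr2 | hr2
          · rw [eT3none (by omega)]
            rw [show ((i:ℕ):ℤ)+1+((k:ℕ):ℤ) = (m:ℤ)+1 by omega] at HW'
            linarith
          · rw [eT3some (by omega)]
            linarith
      · -- k = i+1
        rw [if_pos (by omega), if_neg (by omega), eT2none (by omega)]
        rw [show (0:ℤ) = ((i:ℕ):ℤ)+1-((k:ℕ):ℤ) by omega]
        rcases lt_or_ge ((i:ℕ)+(k:ℕ)) m with hr | hr
        · rw [eT1right (by omega) hr, eT3none (by omega)]
          linarith
        · rw [eT1none (by omega) hr]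
          rcases eq_or_lt_of_le hr with hr2 | hr2
          · rw [eT3none (by omega)]
            rw [show ((i:ℕ):ℤ)+1+((k:ℕ):ℤ) = (m:ℤ)+1 by omega] at HW'
            linarith
          · rw [eT3some (by omega)]
            linarith
      · -- k ≥ i+2
        rw [if_neg (by omega), if_pos (by omega), eT2some (by omega)]
        rcases lt_or_ge ((i:ℕ)+(k:ℕ)) m with hr | hr
        · rw [eT1right (by omega) hr, eT3none (by omega)]
          linarith
        · rw [eT1none (by omega) hr]
          rcases eq_or_lt_of_le hr with hr2 | hr2
          · rw [eT3none (by omega)]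
            rw [show ((i:ℕ):ℤ)+1+((k:ℕ):ℤ) = (m:ℤ)+1 by omega] at HW'
            linarith
          · rw [eT3some (by omega)]
            linarith
  have expand : ∀ j : Fin m, centerM m z i j
      = ∑ k : Fin m, z k *
          ((if (k:ℕ) = (i:ℕ) - (j:ℕ) + ((j:ℕ) - (i:ℕ)) then (1:ℝ) else 0)
            - (if (k:ℕ) = (i:ℕ)+(j:ℕ)+2 then 1 else 0)
            - (if (k:ℕ) = 2*m - (i:ℕ) - (j:ℕ) then 1 else 0)) := by
    intro j
    rw [centerM_apply, zext_eq_sum, zext_eq_sum, zext_eq_sum,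
      ← Finset.sum_sub_distrib, ← Finset.sum_sub_distrib]
    refine Finset.sum_congr rfl fun k _ => ?_
    split_ifs <;> ring
  calc
    ∑ j : Fin m, centerM m z i j * g ((j:ℕ)+1)
        = ∑ j : Fin m, ∑ k : Fin m, z k *
            ((((if (k:ℕ) = (i:ℕ) - (j:ℕ) + ((j:ℕ) - (i:ℕ)) then (1:ℝ) else 0)
              - (if (k:ℕ) = (i:ℕ)+(j:ℕ)+2 then 1 else 0)
              - (if (k:ℕ) = 2*m - (i:ℕ) - (j:ℕ) then 1 else 0)) * g ((j:ℕ)+1))) := by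
        refine Finset.sum_congr rfl fun j _ => ?_
        rw [expand j, Finset.sum_mul]
        exact Finset.sum_congr rfl fun k _ => by ring
    _ = ∑ k : Fin m, z k * ∑ j : Fin m,
            ((((if (k:ℕ) = (i:ℕ) - (j:ℕ) + ((j:ℕ) - (i:ℕ)) then (1:ℝ) else 0)
              - (if (k:ℕ) = (i:ℕ)+(j:ℕ)+2 then 1 else 0)
              - (if (k:ℕ) = 2*m - (i:ℕ) - (j:ℕ) then 1 else 0)) * g ((j:ℕ)+1))) := by
        rw [Finset.sum_comm]
        exact Finset.sum_congr rfl fun k _ => by rw [Finset.mul_sum]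
    _ = _ := by
        rw [Finset.sum_mul, ← Finset.sum_sub_distrib]
        refine Finset.sum_congr rfl fun k _ => ?_
        rw [perk k]
        ring

end ARP
namespace ARP

lemma cos_sum (m k : ℕ) (hk : 0 < k) (hk2 : k < 2*(m+1)) :
    ∑ l ∈ Finset.range m, Real.cos (((l:ℝ)+1) * ((k:ℝ) * Real.pi / ((m:ℝ)+1)))
      = (-1 - (-1:ℝ)^k) / 2 := by
  set t : ℝ := (k:ℝ) * Real.pi / ((m:ℝ)+1) with ht
  have hm1 : ((m:ℝ)+1) ≠ 0 := by positivity
  have hkr : (0:ℝ) < k := by exact_mod_cast hk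
  have hkr2 : (k:ℝ) < 2*((m:ℝ)+1) := by exact_mod_cast hk2
  have htpos : 0 < t/2 := by rw [ht]; positivity
  have htlt : t/2 < Real.pi := by
    rw [ht, div_div, div_lt_iff₀ (by positivity)]
    nlinarith [Real.pi_pos]
  have hs : Real.sin (t/2) ≠ 0 := ne_of_gt (Real.sin_pos_of_pos_of_lt_pi htpos htlt)
  have key : 2 * Real.sin (t/2) * ∑ l ∈ Finset.range m, Real.cos (((l:ℝ)+1) * t)
      = Real.sin ((m:ℝ)*t + t/2) - Real.sin (t/2) := by
    have e : ∀ l ∈ Finset.range m,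
        2 * Real.sin (t/2) * Real.cos (((l:ℝ)+1) * t)
          = (fun l : ℕ => Real.sin ((l:ℝ)*t + t/2)) (l+1)
            - (fun l : ℕ => Real.sin ((l:ℝ)*t + t/2)) l := by
      intro l _
      simp only []
      push_cast
      rw [show ((l:ℝ))*t + t/2 = (((l:ℝ)+1)*t - t/2) by ring, Real.sin_add, Real.sin_sub]
      ring
    rw [Finset.mul_sum, Finset.sum_congr rfl e]
    have tele := Finset.sum_range_sub (fun l : ℕ => Real.sin ((l:ℝ)*t + t/2)) m
    simpa using tele
  have hmt : (m:ℝ)*t + t/2 = (k:ℝ)*Real.pi - t/2 := by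
    rw [ht]
    field_simp
    ring
  rw [hmt, Real.sin_nat_mul_pi_sub] at key
  refine mul_left_cancel₀ hs ?_
  linear_combination (1/2) * key

lemma sin_orth_lt (m : ℕ) (a b : Fin m) (hab : (a:ℕ) < (b:ℕ)) :
    ∑ l : Fin m, Real.sin ((((l:ℕ):ℝ)+1) * (((a:ℕ):ℝ)+1) * Real.pi / ((m:ℝ)+1))
        * Real.sin ((((l:ℕ):ℝ)+1) * (((b:ℕ):ℝ)+1) * Real.pi / ((m:ℝ)+1)) = 0 := by
  have hb := b.isLt
  obtain ⟨d, hdd⟩ : ∃ d, d = (b:ℕ) - (a:ℕ) := ⟨_, rfl⟩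
  obtain ⟨s, hss⟩ : ∃ s, s = (a:ℕ) + (b:ℕ) + 2 := ⟨_, rfl⟩
  have hd0 : (b:ℕ) = (a:ℕ) + d := by omega
  have hd : ((b:ℕ):ℝ) = ((a:ℕ):ℝ) + (d:ℝ) := by exact_mod_cast congrArg (Nat.cast (R := ℝ)) hd0
  have prod : ∀ l : ℕ,
      Real.sin (((l:ℝ)+1) * (((a:ℕ):ℝ)+1) * Real.pi / ((m:ℝ)+1))
          * Real.sin (((l:ℝ)+1) * (((b:ℕ):ℝ)+1) * Real.pi / ((m:ℝ)+1))
        = (Real.cos (((l:ℝ)+1) * ((d:ℝ) * Real.pi / ((m:ℝ)+1)))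
            - Real.cos (((l:ℝ)+1) * ((s:ℝ) * Real.pi / ((m:ℝ)+1)))) / 2 := by
    intro l
    have h1 : ∀ x y : ℝ, Real.sin x * Real.sin y
        = (Real.cos (x - y) - Real.cos (x + y))/2 := by
      intro x y; rw [Real.cos_sub, Real.cos_add]; ring
    rw [h1]
    rw [show ((l:ℝ)+1) * (((a:ℕ):ℝ)+1) * Real.pi / ((m:ℝ)+1)
        - ((l:ℝ)+1) * (((b:ℕ):ℝ)+1) * Real.pi / ((m:ℝ)+1)
        = -(((l:ℝ)+1) * ((d:ℝ) * Real.pi / ((m:ℝ)+1))) by rw [hd]; ring,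
      Real.cos_neg]
    rw [show ((l:ℝ)+1) * (((a:ℕ):ℝ)+1) * Real.pi / ((m:ℝ)+1)
        + ((l:ℝ)+1) * (((b:ℕ):ℝ)+1) * Real.pi / ((m:ℝ)+1)
        = ((l:ℝ)+1) * ((s:ℝ) * Real.pi / ((m:ℝ)+1)) by rw [hss]; push_cast; ring]
  calc ∑ l : Fin m, Real.sin ((((l:ℕ):ℝ)+1) * (((a:ℕ):ℝ)+1) * Real.pi / ((m:ℝ)+1))
        * Real.sin ((((l:ℕ):ℝ)+1) * (((b:ℕ):ℝ)+1) * Real.pi / ((m:ℝ)+1))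
      = ∑ l ∈ Finset.range m,
          (Real.cos (((l:ℝ)+1) * ((d:ℝ) * Real.pi / ((m:ℝ)+1)))
            - Real.cos (((l:ℝ)+1) * ((s:ℝ) * Real.pi / ((m:ℝ)+1)))) / 2 := by
        rw [← Fin.sum_univ_eq_sum_range (fun l : ℕ =>
          (Real.cos (((l:ℝ)+1) * ((d:ℝ) * Real.pi / ((m:ℝ)+1)))
            - Real.cos (((l:ℝ)+1) * ((s:ℝ) * Real.pi / ((m:ℝ)+1)))) / 2) m]
        exact Finset.sum_congr rfl fun l _ => prod (l:ℕ)
    _ = ((∑ l ∈ Finset.range m, Real.cos (((l:ℝ)+1) * ((d:ℝ) * Real.pi / ((m:ℝ)+1))))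
          - ∑ l ∈ Finset.range m, Real.cos (((l:ℝ)+1) * ((s:ℝ) * Real.pi / ((m:ℝ)+1)))) / 2 := by
        rw [← Finset.sum_div, Finset.sum_sub_distrib]
    _ = 0 := by
        rw [cos_sum m d (by omega) (by omega), cos_sum m s (by omega) (by omega)]
        rw [show s = d + 2*((a:ℕ)+1) by omega, pow_add, pow_mul]
        norm_num

lemma sin_orth (m : ℕ) (a b : Fin m) (hab : a ≠ b) :
    ∑ l : Fin m, Real.sin ((((l:ℕ):ℝ)+1) * (((a:ℕ):ℝ)+1) * Real.pi / ((m:ℝ)+1))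
        * Real.sin ((((l:ℕ):ℝ)+1) * (((b:ℕ):ℝ)+1) * Real.pi / ((m:ℝ)+1)) = 0 := by
  rcases lt_or_gt_of_ne (fun h => hab (Fin.ext h) : (a:ℕ) ≠ (b:ℕ)) with h | h
  · exact sin_orth_lt m a b h
  · rw [Finset.sum_congr rfl fun l _ => mul_comm _ _]
    exact sin_orth_lt m b a h

/-- eigenvalue of the central block for frequency `t`. -/
noncomputable def eigval (m : ℕ) (z : Fin m → ℝ) (t : Fin m) : ℝ :=
  ∑ k : Fin m, z k * (if (k:ℕ) = 0 then 1
    else 2 * Real.cos (((k:ℕ):ℝ) * ((((t:ℕ):ℝ)+1) * Real.pi / ((m:ℝ)+1))))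

lemma centerM_eig (m : ℕ) (z : Fin m → ℝ) (i t : Fin m) :
    ∑ j : Fin m, centerM m z i j
        * Real.sin ((((j:ℕ):ℝ)+1) * ((((t:ℕ):ℝ)+1) * Real.pi / ((m:ℝ)+1)))
      = eigval m z t * Real.sin ((((i:ℕ):ℝ)+1) * ((((t:ℕ):ℝ)+1) * Real.pi / ((m:ℝ)+1))) := by
  set θ : ℝ := (((t:ℕ):ℝ)+1) * Real.pi / ((m:ℝ)+1) with hθ
  have hm1 : ((m:ℝ)+1) ≠ 0 := by positivity
  have hmθ : ((m:ℝ)+1) * θ = (((t:ℕ):ℝ)+1) * Real.pi := by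
    rw [hθ]; field_simp
  have h := centerM_sum_g m z (fun x : ℤ => Real.sin ((x:ℝ) * θ))
    (fun k => 2 * Real.cos ((k:ℝ) * θ))
    (fun x => by
      rw [show ((((2*((m:ℕ)+1) - x) : ℤ)):ℝ) * θ
          = ((((t:ℕ)+1) : ℕ):ℝ) * (2*Real.pi) - (x:ℝ)*θ by
        push_cast
        linear_combination (2:ℝ) * hmθ]
      exact Real.sin_nat_mul_two_pi_sub _ _)
    (fun x k _ _ => by
      push_cast
      rw [sub_mul, add_mul, Real.sin_sub, Real.sin_add]
      ring) i
  have hcorr : ∑ k : Fin m, z k *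
      ((if (k:ℕ) = (i:ℕ)+1 then Real.sin (((0:ℤ):ℝ) * θ) else 0)
        + (if (i:ℕ)+2 ≤ (k:ℕ) then
            Real.sin ((((((k:ℕ):ℤ) - ((i:ℕ):ℤ) - 1):ℤ):ℝ) * θ)
              + Real.sin ((((((i:ℕ):ℤ) + 1 - ((k:ℕ):ℤ)):ℤ):ℝ) * θ) else 0)) = 0 := by
    refine Finset.sum_eq_zero fun k _ => ?_
    rw [show Real.sin (((0:ℤ):ℝ) * θ) = 0 by norm_num]
    rw [show Real.sin ((((((k:ℕ):ℤ) - ((i:ℕ):ℤ) - 1):ℤ):ℝ) * θ)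
          + Real.sin ((((((i:ℕ):ℤ) + 1 - ((k:ℕ):ℤ)):ℤ):ℝ) * θ) = 0 by
      rw [show ((((((i:ℕ):ℤ) + 1 - ((k:ℕ):ℤ)):ℤ):ℝ) * θ)
          = -(((((((k:ℕ):ℤ) - ((i:ℕ):ℤ) - 1):ℤ):ℝ)) * θ) by push_cast; ring]
      rw [Real.sin_neg]; ring]
    simp
  rw [hcorr] at h
  calc ∑ j : Fin m, centerM m z i j
        * Real.sin ((((j:ℕ):ℝ)+1) * θ)
      = ∑ j : Fin m, centerM m z i j * Real.sin (((((j:ℕ):ℤ)+1 : ℤ):ℝ) * θ) := by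
        refine Finset.sum_congr rfl fun j _ => ?_
        norm_num
    _ = eigval m z t * Real.sin ((((i:ℕ):ℝ)+1) * θ) := by
        rw [h, sub_zero, eigval]
        congr 1
        push_cast
        ring
  
end ARP
namespace ARP

lemma SMS_offdiag (m : ℕ) (z : Fin m → ℝ) (i j : Fin m) (hij : i ≠ j) :
    (sineMat m * centerM m z * sineMat m) i j = 0 := by
  rw [Matrix.mul_assoc, Matrix.mul_apply]
  have col : ∀ l : Fin m, (centerM m z * sineMat m) l j
      = eigval m z j * sineMat m l j := by
    intro l
    rw [Matrix.mul_apply]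
    calc ∑ b : Fin m, centerM m z l b * sineMat m b j
        = Real.sqrt (2/((m:ℝ)+1)) * ∑ b : Fin m, centerM m z l b
            * Real.sin ((((b:ℕ):ℝ)+1) * ((((j:ℕ):ℝ)+1) * Real.pi / ((m:ℝ)+1))) := by
          rw [Finset.mul_sum]
          refine Finset.sum_congr rfl fun b _ => ?_
          simp only [sineMat, Matrix.of_apply]
          rw [show (((b:ℕ):ℝ)+1) * ((((j:ℕ):ℝ)+1) * Real.pi / ((m:ℝ)+1))
              = (((b:ℕ):ℝ)+1) * ((((j:ℕ):ℝ))+1) * Real.pi / ((m:ℝ)+1) by ring]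
          ring
      _ = eigval m z j * sineMat m l j := by
          rw [centerM_eig]
          simp only [sineMat, Matrix.of_apply]
          rw [show (((l:ℕ):ℝ)+1) * ((((j:ℕ):ℝ)+1) * Real.pi / ((m:ℝ)+1))
              = (((l:ℕ):ℝ)+1) * ((((j:ℕ):ℝ))+1) * Real.pi / ((m:ℝ)+1) by ring]
          ring
  rw [Finset.sum_congr rfl fun l _ => by rw [col l]]
  have e : ∀ l : Fin m, sineMat m i l * (eigval m z j * sineMat m l j)
      = eigval m z j * (Real.sqrt (2/((m:ℝ)+1)) * Real.sqrt (2/((m:ℝ)+1)))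
        * (Real.sin ((((l:ℕ):ℝ)+1) * (((i:ℕ):ℝ)+1) * Real.pi/((m:ℝ)+1))
           * Real.sin ((((l:ℕ):ℝ)+1) * (((j:ℕ):ℝ)+1) * Real.pi/((m:ℝ)+1))) := by
    intro l
    simp only [sineMat, Matrix.of_apply]
    rw [show (((i:ℕ):ℝ)+1) * (((l:ℕ):ℝ)+1) * Real.pi/((m:ℝ)+1)
        = (((l:ℕ):ℝ)+1) * (((i:ℕ):ℝ)+1) * Real.pi/((m:ℝ)+1) by ring]
    ring
  rw [Finset.sum_congr rfl fun l _ => e l, ← Finset.mul_sum, sin_orth m i j hij, mul_zero]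

/-- interior part of the first column of `arMat`. -/
noncomputable def uvec (n : ℕ) (z : Fin (n-2) → ℝ) : Fin (n-2) → ℝ :=
  fun i => arCol n z ⟨(i:ℕ)+1, by have := i.isLt; omega⟩

/-- the `(0,0)` entry of `arMat` in weighted-sum form. -/
noncomputable def c0 (n : ℕ) (z : Fin (n-2) → ℝ) : ℝ :=
  ∑ k : Fin (n-2), z k * (if (k:ℕ) = 0 then 1 else 2)

lemma arCol_zero (n : ℕ) (hn : 5 ≤ n) (z : Fin (n-2) → ℝ) :
    arCol n z ⟨0, by omega⟩ = c0 n z := by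
  have h2 : (0:ℕ) < n - 2 := by omega
  rw [arCol]
  rw [dif_pos (by simpa using h2)]
  rw [c0]
  have e : ∀ k : Fin (n-2), z k * (if (k:ℕ) = 0 then (1:ℝ) else 2)
      = (if k = (⟨0, h2⟩ : Fin (n-2)) then z k else 0)
        + 2*(if ((⟨0, by omega⟩ : Fin n):ℕ) < (k:ℕ) then z k else 0) := by
    intro k
    by_cases hk : (k:ℕ) = 0
    · rw [if_pos hk, if_pos (Fin.ext hk), if_neg (by simp; omega)]
      ring
    · rw [if_neg hk,
        if_neg (show ¬(k = (⟨0, h2⟩ : Fin (n-2))) from fun hke => hk (by rw [hke])),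
        if_pos (by simp; omega)]
      ring
  rw [Finset.sum_congr rfl fun k _ => e k, Finset.sum_add_distrib, ← Finset.mul_sum]
  simp

lemma corr_sum (n : ℕ) (hn : 5 ≤ n) (z : Fin (n-2) → ℝ) (i : Fin (n-2)) :
    ∑ k : Fin (n-2), z k *
        ((if (k:ℕ) = (i:ℕ)+1 then (((n-2:ℕ):ℝ)+1) else 0)
          + (if (i:ℕ)+2 ≤ (k:ℕ) then 2*(((n-2:ℕ):ℝ)+1) else 0))
      = (((n-2:ℕ):ℝ)+1) * uvec n z i := by
  rw [uvec, arCol]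
  by_cases hh : (i:ℕ)+1 < n-2
  · rw [dif_pos (by simpa using hh)]
    have e : ∀ k : Fin (n-2), z k *
        ((if (k:ℕ) = (i:ℕ)+1 then (((n-2:ℕ):ℝ)+1) else 0)
          + (if (i:ℕ)+2 ≤ (k:ℕ) then 2*(((n-2:ℕ):ℝ)+1) else 0))
        = (((n-2:ℕ):ℝ)+1) * ((if k = (⟨(i:ℕ)+1, hh⟩ : Fin (n-2)) then z k else 0)
            + 2*(if ((⟨(i:ℕ)+1, by omega⟩ : Fin n):ℕ) < (k:ℕ) then z k else 0)) := by
      intro k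
      by_cases h1 : (k:ℕ) = (i:ℕ)+1
      · rw [if_pos h1, if_pos (Fin.ext h1), if_neg (by omega), if_neg (by simp; omega)]
        ring
      · rw [if_neg h1,
          if_neg (show ¬(k = (⟨(i:ℕ)+1, hh⟩ : Fin (n-2))) from fun hke => h1 (by rw [hke]))]
        by_cases h2 : (i:ℕ)+2 ≤ (k:ℕ)
        · rw [if_pos h2, if_pos (by simp; omega)]
          ring
        · rw [if_neg h2, if_neg (by simp; omega)]
          ring
    rw [Finset.sum_congr rfl fun k _ => e k, ← Finset.mul_sum, Finset.sum_add_distrib,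
      ← Finset.mul_sum]
    simp
  · rw [dif_neg (by simpa using hh)]
    rw [mul_zero]
    refine Finset.sum_eq_zero fun k _ => ?_
    have := k.isLt
    rw [if_neg (show ¬((k:ℕ) = (i:ℕ)+1) by omega), if_neg (show ¬((i:ℕ)+2 ≤ (k:ℕ)) by omega)]
    ring

lemma col_identity (n : ℕ) (hn : 5 ≤ n) (z : Fin (n-2) → ℝ) :
    (centerM (n-2) z).mulVec (pvec n) + uvec n z = c0 n z • pvec n := by
  have hm1 : (((n-2:ℕ):ℝ)+1) ≠ 0 := by positivity
  have hcast : ((n:ℝ)) - 1 = ((n-2:ℕ):ℝ) + 1 := by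
    have : ((n-2:ℕ):ℝ) = (n:ℝ) - 2 := by
      push_cast [Nat.cast_sub (by omega : 2 ≤ n)]
      ring
    rw [this]; ring
  funext i
  have h := centerM_sum_g (n-2) z (fun x : ℤ => (((n-2:ℕ):ℝ)+1) - (x:ℝ)) (fun _ => 2)
    (fun x => by push_cast; ring)
    (fun x k _ _ => by push_cast; ring) i
  have hc : (∑ k : Fin (n-2), z k * (if (k:ℕ) = 0 then (1:ℝ) else 2)) = c0 n z := rfl
  rw [hc] at h
  have hp : ∀ j : Fin (n-2), pvec n j
      = ((((n-2:ℕ):ℝ)+1) - (((((j:ℕ):ℤ)+1 : ℤ)):ℝ)) / (((n-2:ℕ):ℝ)+1) := by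
    intro j
    have hne : ((n:ℝ)) - 1 ≠ 0 := by rw [hcast]; exact hm1
    rw [pvec, ← hcast]
    push_cast
    field_simp
  have hcorr : ∑ k : Fin (n-2), z k *
      ((if (k:ℕ) = (i:ℕ)+1 then ((((n-2:ℕ):ℝ)+1) - (((0:ℤ)):ℝ)) else 0)
        + (if (i:ℕ)+2 ≤ (k:ℕ) then
            ((((n-2:ℕ):ℝ)+1) - (((((k:ℕ):ℤ) - ((i:ℕ):ℤ) - 1):ℤ):ℝ))
              + ((((n-2:ℕ):ℝ)+1) - (((((i:ℕ):ℤ) + 1 - ((k:ℕ):ℤ)):ℤ):ℝ)) else 0))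
      = (((n-2:ℕ):ℝ)+1) * uvec n z i := by
    rw [← corr_sum n hn z i]
    refine Finset.sum_congr rfl fun k _ => ?_
    congr 1
    congr 1
    · congr 1
      norm_num
    · by_cases h2 : (i:ℕ)+2 ≤ (k:ℕ)
      · rw [if_pos h2, if_pos h2]
        push_cast
        ring
      · rw [if_neg h2, if_neg h2]
  rw [hcorr] at h
  have hmv : (centerM (n-2) z).mulVec (pvec n) i
      = (∑ j : Fin (n-2), centerM (n-2) z i j
          * ((((n-2:ℕ):ℝ)+1) - (((((j:ℕ):ℤ)+1 : ℤ)):ℝ))) / (((n-2:ℕ):ℝ)+1) := by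
    rw [Matrix.mulVec, dotProduct, Finset.sum_div]
    refine Finset.sum_congr rfl fun j _ => ?_
    rw [hp j, mul_div_assoc]
  rw [Pi.add_apply, Pi.smul_apply, smul_eq_mul, hmv, h, hp i]
  field_simp
  ring

lemma centerM_flipflip (m : ℕ) (z : Fin m → ℝ) (i j : Fin m) :
    centerM m z i j
      = centerM m z ⟨m-1-(i:ℕ), by have := i.isLt; omega⟩ ⟨m-1-(j:ℕ), by have := j.isLt; omega⟩ := by
  have hi := i.isLt; have hj := j.isLt
  rw [centerM_apply, centerM_apply]
  simp only [Fin.val_mk]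
  rw [show (m-1-(i:ℕ)) - (m-1-(j:ℕ)) + ((m-1-(j:ℕ)) - (m-1-(i:ℕ)))
      = (i:ℕ) - (j:ℕ) + ((j:ℕ) - (i:ℕ)) by omega]
  rw [show (m-1-(i:ℕ)) + (m-1-(j:ℕ)) + 2 = 2*m - (i:ℕ) - (j:ℕ) by omega]
  rw [show 2*m - (m-1-(i:ℕ)) - (m-1-(j:ℕ)) = (i:ℕ)+(j:ℕ)+2 by omega]
  ring

/-- flip as an equivalence of `Fin m`. -/
def flipEquiv (m : ℕ) : Fin m ≃ Fin m where
  toFun i := ⟨m-1-(i:ℕ), by have := i.isLt; omega⟩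
  invFun i := ⟨m-1-(i:ℕ), by have := i.isLt; omega⟩
  left_inv i := by ext; simp only [Fin.val_mk]; have := i.isLt; omega
  right_inv i := by ext; simp only [Fin.val_mk]; have := i.isLt; omega

lemma mulVec_flipVec (m : ℕ) (z : Fin m → ℝ) (v : Fin m → ℝ) :
    (centerM m z).mulVec (flipVec m v) = flipVec m ((centerM m z).mulVec v) := by
  funext i
  rw [Matrix.mulVec, dotProduct, flipVec]
  rw [Matrix.mulVec, dotProduct]
  refine Fintype.sum_equiv (flipEquiv m) _ _ fun j => ?_
  simp only [flipEquiv, Equiv.coe_fn_mk, flipVec]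
  rw [centerM_flipflip m z i j]

lemma flipMat_mulVec (m : ℕ) (v : Fin m → ℝ) :
    (flipMat m).mulVec v = flipVec m v := by
  funext i
  have hi := i.isLt
  rw [Matrix.mulVec, dotProduct, flipVec]
  rw [Finset.sum_congr rfl fun j _ => by
    rw [show flipMat m i j * v j = (if (i:ℕ)+(j:ℕ) = m-1 then v j else 0) by
      rw [flipMat, Matrix.of_apply]; split_ifs <;> ring]]
  rw [sum_ite_unique v (fun j => (i:ℕ)+(j:ℕ) = m-1) ⟨m-1-(i:ℕ), by omega⟩
    (fun j => by simp only [Fin.ext_iff, Fin.val_mk]; have := j.isLt; omega)]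

end ARP
namespace ARP

lemma sum_split (n : ℕ) (hn : 5 ≤ n) (f : Fin n → ℝ) :
    ∑ k : Fin n, f k
      = f ⟨0, by omega⟩
        + (∑ k : Fin (n-2), f ⟨(k:ℕ)+1, by have := k.isLt; omega⟩)
        + f ⟨n-1, by omega⟩ := by
  classical
  set F : ℕ → ℝ := fun t => if h : t < n then f ⟨t, h⟩ else 0 with hF
  have h1 : ∑ k : Fin n, f k = ∑ t ∈ Finset.range n, F t := by
    rw [← Fin.sum_univ_eq_sum_range F n]
    refine Finset.sum_congr rfl fun k _ => ?_
    rw [hF]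
    simp only []
    rw [dif_pos k.isLt]
  have h2 : Finset.range n = Finset.range ((n-2)+1+1) := by
    congr 1
    omega
  have h4 : ∑ t ∈ Finset.range (n-2), F (t+1)
      = ∑ k : Fin (n-2), f ⟨(k:ℕ)+1, by have := k.isLt; omega⟩ := by
    rw [← Fin.sum_univ_eq_sum_range (fun t => F (t+1)) (n-2)]
    refine Finset.sum_congr rfl fun k _ => ?_
    rw [hF]
    simp only []
    rw [dif_pos (by have := k.isLt; omega : (k:ℕ)+1 < n)]
  have h5 : F ((n-2)+1) = f ⟨n-1, by omega⟩ := by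
    rw [hF]
    simp only []
    rw [dif_pos (by omega : (n-2)+1 < n)]
    congr 1
    exact Fin.ext (by simp only [Fin.val_mk]; omega)
  have h6 : F 0 = f ⟨0, by omega⟩ := by
    rw [hF]
    simp only []
    rw [dif_pos (by omega : 0 < n)]
  rw [h1, h2, Finset.sum_range_succ, Finset.sum_range_succ', h4, h5, h6]
  ring

lemma blockT_apply_top {n : ℕ} {x y : Fin (n-2) → ℝ} {M : Matrix (Fin (n-2)) (Fin (n-2)) ℝ}
    {i j : Fin n} (hi : (i:ℕ) = 0) :
    blockT n x y M i j = if (j:ℕ) = 0 then 1 else 0 := by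
  simp only [blockT, Matrix.of_apply]
  rw [if_pos hi]

lemma blockT_apply_bot {n : ℕ} {x y : Fin (n-2) → ℝ} {M : Matrix (Fin (n-2)) (Fin (n-2)) ℝ}
    {i j : Fin n} (hn : 2 ≤ n) (hi : (i:ℕ) = n-1) :
    blockT n x y M i j = if (j:ℕ) = n-1 then 1 else 0 := by
  simp only [blockT, Matrix.of_apply]
  rw [if_neg (by omega), if_pos hi]

lemma blockT_apply_mid {n : ℕ} {x y : Fin (n-2) → ℝ} {M : Matrix (Fin (n-2)) (Fin (n-2)) ℝ}
    {i j : Fin n} (h0 : 0 < (i:ℕ)) (h1 : (i:ℕ) < n-1) :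
    blockT n x y M i j
      = (if (j:ℕ) = 0 then x ⟨(i:ℕ)-1, by omega⟩
          else if (j:ℕ) = n-1 then y ⟨(i:ℕ)-1, by omega⟩
          else if h2 : 0 < (j:ℕ) ∧ (j:ℕ) < n-1 then
            M ⟨(i:ℕ)-1, by omega⟩ ⟨(j:ℕ)-1, by omega⟩ else 0) := by
  simp only [blockT, Matrix.of_apply]
  rw [if_neg (by omega), if_neg (by omega), dif_pos ⟨h0, h1⟩]

lemma mk_succ_sub_one {m : ℕ} (k : Fin m) (h : (k:ℕ)+1-1 < m) :
    (⟨(k:ℕ)+1-1, h⟩ : Fin m) = k := Fin.ext (by simp)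

set_option maxHeartbeats 1600000 in
lemma blockT_mul (n : ℕ) (hn : 5 ≤ n) (x y x' y' : Fin (n-2) → ℝ)
    (M M' : Matrix (Fin (n-2)) (Fin (n-2)) ℝ) :
    blockT n x y M * blockT n x' y' M'
      = blockT n (x + M.mulVec x') (y + M.mulVec y') (M * M') := by
  ext i j
  rw [Matrix.mul_apply,
    sum_split n hn (fun k => blockT n x y M i k * blockT n x' y' M' k j)]
  by_cases hi0 : (i:ℕ) = 0
  · simp only [blockT_apply_top hi0, Fin.val_mk]
    rw [if_true, if_neg (show ¬(n-1 = 0) by omega)]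
    rw [Finset.sum_congr rfl (fun k _ => by
      rw [if_neg (Nat.succ_ne_zero (k:ℕ)), zero_mul])]
    rw [Finset.sum_const_zero, one_mul, zero_mul, add_zero, add_zero]
    exact blockT_apply_top rfl
  · by_cases hin : (i:ℕ) = n-1
    · simp only [blockT_apply_bot (show 2 ≤ n by omega) hin, Fin.val_mk]
      rw [Finset.sum_congr rfl (fun k _ => by
        rw [if_neg (show ¬((k:ℕ)+1 = n-1) from by have := k.isLt; omega), zero_mul])]
      rw [Finset.sum_const_zero, if_true, one_mul,
        if_neg (show ¬((0:ℕ) = n-1) by omega), zero_mul, zero_add, zero_add]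
      exact blockT_apply_bot (by omega) rfl
    · have h0 : 0 < (i:ℕ) := by omega
      have h1 : (i:ℕ) < n-1 := by omega
      simp only [blockT_apply_mid h0 h1, Fin.val_mk]
      rw [if_true, if_neg (show ¬(n-1 = 0) by omega), if_true]
      rw [Finset.sum_congr rfl (fun k _ => by
        rw [if_neg (Nat.succ_ne_zero (k:ℕ)),
          if_neg (show ¬((k:ℕ)+1 = n-1) from by have := k.isLt; omega),
          dif_pos (show 0 < (k:ℕ)+1 ∧ (k:ℕ)+1 < n-1 from
            ⟨Nat.succ_pos _, by have := k.isLt; omega⟩),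
          blockT_apply_mid (i := (⟨(k:ℕ)+1, by have := k.isLt; omega⟩ : Fin n))
            (Nat.succ_pos _) (by simp only [Fin.val_mk]; have := k.isLt; omega)])]
      rw [blockT_apply_top (i := (⟨0, by omega⟩ : Fin n)) rfl,
        blockT_apply_bot (i := (⟨n-1, by omega⟩ : Fin n)) (by omega) rfl]
      by_cases hj0 : (j:ℕ) = 0
      · simp only [if_pos hj0, if_neg (show ¬((j:ℕ) = n-1) from by omega),
          dif_neg (show ¬(0 < (j:ℕ) ∧ (j:ℕ) < n-1) from by omega), mk_succ_sub_one]
        rw [Pi.add_apply, Matrix.mulVec, dotProduct]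
        ring
      · by_cases hjn : (j:ℕ) = n-1
        · simp only [if_neg hj0, if_pos hjn,
            dif_neg (show ¬(0 < (j:ℕ) ∧ (j:ℕ) < n-1) from by omega), mk_succ_sub_one]
          rw [Pi.add_apply, Matrix.mulVec, dotProduct]
          ring
        · by_cases hjm : 0 < (j:ℕ) ∧ (j:ℕ) < n-1
          · simp only [if_neg hj0, if_neg hjn, dif_pos hjm, mk_succ_sub_one]
            rw [Matrix.mul_apply]
            ring
          · simp only [if_neg hj0, if_neg hjn, dif_neg hjm]
            rw [Finset.sum_congr rfl (fun k _ => mul_zero _), Finset.sum_const_zero]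
            ring

end ARP
namespace ARP

lemma arCol_big (n : ℕ) (z : Fin (n-2) → ℝ) (i : Fin n) (hi : n-2 ≤ (i:ℕ)) :
    arCol n z i = 0 := by rw [arCol, dif_neg (by omega)]

set_option maxHeartbeats 1600000 in
lemma arMat_decomp (n : ℕ) (hn : 5 ≤ n) (z : Fin (n-2) → ℝ) :
    arMat n z = blockT n (uvec n z) (flipVec (n-2) (uvec n z)) (centerM (n-2) z)
      + (c0 n z - 1) • blockT n 0 0 (0 : Matrix (Fin (n-2)) (Fin (n-2)) ℝ) := by
  ext i j
  rw [Matrix.add_apply, Matrix.smul_apply, smul_eq_mul]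
  simp only [arMat, Matrix.of_apply]
  by_cases hj0 : (j:ℕ) = 0
  · rw [if_pos hj0]
    by_cases hi0 : (i:ℕ) = 0
    · simp only [blockT_apply_top hi0]
      rw [if_pos hj0]
      rw [show i = (⟨0, by omega⟩ : Fin n) from Fin.ext hi0, arCol_zero n hn z]
      ring
    · by_cases hin : (i:ℕ) = n-1
      · simp only [blockT_apply_bot (show 2 ≤ n by omega) hin]
        rw [if_neg (show ¬((j:ℕ) = n-1) from by omega), arCol_big n z i (by omega)]
        ring
      · have h0 : 0 < (i:ℕ) := by omega
        have h1 : (i:ℕ) < n-1 := by omega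
        simp only [blockT_apply_mid h0 h1]
        rw [if_pos hj0, if_pos hj0, Pi.zero_apply, mul_zero, add_zero]
        simp only [uvec]
        congr 1
        exact Fin.ext (by simp only [Fin.val_mk]; omega)
  · by_cases hjn : (j:ℕ) = n-1
    · rw [if_neg hj0, if_pos hjn]
      by_cases hi0 : (i:ℕ) = 0
      · simp only [blockT_apply_top hi0]
        rw [if_neg hj0, arCol_big n z _ (by simp only [Fin.val_mk]; omega)]
        ring
      · by_cases hin : (i:ℕ) = n-1
        · simp only [blockT_apply_bot (show 2 ≤ n by omega) hin]
          rw [if_pos hjn]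
          rw [show (⟨n-1-(i:ℕ), by have := i.isLt; omega⟩ : Fin n) = (⟨0, by omega⟩ : Fin n)
            from Fin.ext (by simp only [Fin.val_mk]; omega), arCol_zero n hn z]
          ring
        · have h0 : 0 < (i:ℕ) := by omega
          have h1 : (i:ℕ) < n-1 := by omega
          simp only [blockT_apply_mid h0 h1]
          rw [if_neg hj0, if_neg hj0, if_pos hjn, if_pos hjn, Pi.zero_apply, mul_zero, add_zero]
          simp only [flipVec, uvec]
          congr 1
          exact Fin.ext (by simp only [Fin.val_mk]; omega)
    · have hjm : 0 < (j:ℕ) ∧ (j:ℕ) < n-1 := by omega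
      rw [if_neg hj0, if_neg hjn]
      by_cases hi0 : (i:ℕ) = 0
      · simp only [blockT_apply_top hi0]
        rw [if_neg hj0,
          dif_neg (show ¬(0 < (i:ℕ) ∧ (i:ℕ) < n-1 ∧ 0 < (j:ℕ) ∧ (j:ℕ) < n-1) from by omega)]
        ring
      · by_cases hin : (i:ℕ) = n-1
        · simp only [blockT_apply_bot (show 2 ≤ n by omega) hin]
          rw [if_neg hjn,
            dif_neg (show ¬(0 < (i:ℕ) ∧ (i:ℕ) < n-1 ∧ 0 < (j:ℕ) ∧ (j:ℕ) < n-1) from by omega)]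
          ring
        · have h0 : 0 < (i:ℕ) := by omega
          have h1 : (i:ℕ) < n-1 := by omega
          simp only [blockT_apply_mid h0 h1]
          rw [if_neg hj0, if_neg hj0, if_neg hjn, if_neg hjn,
            dif_pos (show 0 < (i:ℕ) ∧ (i:ℕ) < n-1 ∧ 0 < (j:ℕ) ∧ (j:ℕ) < n-1 from
              ⟨h0, h1, hjm.1, hjm.2⟩),
            dif_pos hjm, dif_pos hjm, Matrix.zero_apply, mul_zero, add_zero]
          simp only [centerM, Matrix.sub_apply]

end ARP

set_option maxHeartbeats 1600000 in
/-- for `n ≥ 5`, the matrix `B = arMat n z` belongs to the anti-reflective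
algebra `𝒜ℛ`: `T_n⁻¹ B T_n` is a diagonal matrix. -/
theorem arMat_mem_antireflective_algebra (n : ℕ) (hn : 5 ≤ n) (z : Fin (n - 2) → ℝ) :
    (TinvMat n * arMat n z * Tmat n).IsDiag := by
  classical
  have hTi : TinvMat n = blockT n
      (fun i => -((sineMat (n-2)).mulVec (pvec n) i))
      (fun i => -((sineMat (n-2)).mulVec ((flipMat (n-2)).mulVec (pvec n)) i))
      (sineMat (n-2)) := rfl
  have hT : Tmat n = blockT n (pvec n) ((flipMat (n-2)).mulVec (pvec n)) (sineMat (n-2)) := rfl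
  rw [ARP.arMat_decomp n hn z, Matrix.mul_add, Matrix.mul_smul, Matrix.add_mul,
    Matrix.smul_mul, hTi, hT]
  rw [ARP.blockT_mul n hn, ARP.blockT_mul n hn, ARP.blockT_mul n hn, ARP.blockT_mul n hn]
  -- key vector identities
  have hvec1 : (sineMat (n-2)).mulVec (ARP.uvec n z)
      + ((sineMat (n-2)) * ARP.centerM (n-2) z).mulVec (pvec n)
      = ARP.c0 n z • (sineMat (n-2)).mulVec (pvec n) := by
    rw [← Matrix.mulVec_mulVec, ← Matrix.mulVec_add, ← Matrix.mulVec_smul]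
    refine congrArg (fun v => (sineMat (n-2)).mulVec v) ?_
    have hc := ARP.col_identity n hn z
    funext I
    have h2 := congrFun hc I
    simp only [Pi.add_apply, Pi.smul_apply, smul_eq_mul] at h2 ⊢
    linarith
  have hflip : (ARP.centerM (n-2) z).mulVec ((flipMat (n-2)).mulVec (pvec n))
      + flipVec (n-2) (ARP.uvec n z) = ARP.c0 n z • ((flipMat (n-2)).mulVec (pvec n)) := by
    rw [ARP.flipMat_mulVec, ARP.mulVec_flipVec]
    funext I
    have h2 := congrFun (ARP.col_identity n hn z) ⟨(n-2)-1-(I:ℕ), by have := I.isLt; omega⟩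
    simp only [Pi.add_apply, Pi.smul_apply, smul_eq_mul] at h2
    simp only [flipVec, Pi.add_apply, Pi.smul_apply, smul_eq_mul]
    linarith
  have hvec2 : (sineMat (n-2)).mulVec (flipVec (n-2) (ARP.uvec n z))
      + ((sineMat (n-2)) * ARP.centerM (n-2) z).mulVec ((flipMat (n-2)).mulVec (pvec n))
      = ARP.c0 n z • (sineMat (n-2)).mulVec ((flipMat (n-2)).mulVec (pvec n)) := by
    rw [← Matrix.mulVec_mulVec, ← Matrix.mulVec_add, ← Matrix.mulVec_smul]
    refine congrArg (fun v => (sineMat (n-2)).mulVec v) ?_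
    funext I
    have h2 := congrFun hflip I
    simp only [Pi.add_apply, Pi.smul_apply, smul_eq_mul] at h2 ⊢
    linarith
  intro i j hij
  have hv : (i:ℕ) ≠ (j:ℕ) := fun h => hij (Fin.ext h)
  rw [Matrix.add_apply, Matrix.smul_apply, smul_eq_mul]
  by_cases hi0 : (i:ℕ) = 0
  · rw [ARP.blockT_apply_top hi0, ARP.blockT_apply_top hi0,
      if_neg (show ¬((j:ℕ) = 0) by omega)]
    ring
  · by_cases hin : (i:ℕ) = n-1
    · rw [ARP.blockT_apply_bot (by omega) hin, ARP.blockT_apply_bot (by omega) hin,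
        if_neg (show ¬((j:ℕ) = n-1) from by have := j.isLt; omega)]
      ring
    · have h0 : 0 < (i:ℕ) := by omega
      have h1 : (i:ℕ) < n-1 := by omega
      rw [ARP.blockT_apply_mid h0 h1, ARP.blockT_apply_mid h0 h1]
      by_cases hj0 : (j:ℕ) = 0
      · rw [if_pos hj0, if_pos hj0]
        simp only [Pi.add_apply, Matrix.mulVec_zero, Matrix.mul_zero, Matrix.zero_mulVec,
          Pi.zero_apply, add_zero]
        have key : ∀ I : Fin (n-2),
            -((sineMat (n-2)).mulVec (pvec n) I) + (sineMat (n-2)).mulVec (ARP.uvec n z) I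
              + ((sineMat (n-2)) * ARP.centerM (n-2) z).mulVec (pvec n) I
              + (ARP.c0 n z - 1) * -((sineMat (n-2)).mulVec (pvec n) I) = 0 := by
          intro I
          have h2 := congrFun hvec1 I
          simp only [Pi.add_apply, Pi.smul_apply, smul_eq_mul] at h2
          linear_combination h2
        exact key _
      · by_cases hjn : (j:ℕ) = n-1
        · rw [if_neg hj0, if_neg hj0, if_pos hjn, if_pos hjn]
          simp only [Pi.add_apply, Matrix.mulVec_zero, Matrix.mul_zero, Matrix.zero_mulVec,
            Pi.zero_apply, add_zero]
          have key : ∀ I : Fin (n-2),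
              -((sineMat (n-2)).mulVec ((flipMat (n-2)).mulVec (pvec n)) I)
                + (sineMat (n-2)).mulVec (flipVec (n-2) (ARP.uvec n z)) I
                + ((sineMat (n-2)) * ARP.centerM (n-2) z).mulVec
                    ((flipMat (n-2)).mulVec (pvec n)) I
                + (ARP.c0 n z - 1)
                  * -((sineMat (n-2)).mulVec ((flipMat (n-2)).mulVec (pvec n)) I) = 0 := by
            intro I
            have h2 := congrFun hvec2 I
            simp only [Pi.add_apply, Pi.smul_apply, smul_eq_mul] at h2
            linear_combination h2
          exact key _
        · have hjm : 0 < (j:ℕ) ∧ (j:ℕ) < n-1 := by omega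
          rw [if_neg hj0, if_neg hj0, if_neg hjn, if_neg hjn, dif_pos hjm, dif_pos hjm]
          rw [Matrix.mul_zero, Matrix.zero_mul, Matrix.zero_apply, mul_zero, add_zero]
          exact ARP.SMS_offdiag (n-2) z _ _
            (fun h => by
              have := congrArg Fin.val h
              simp only [Fin.val_mk] at this
              omega)
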